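/- Let k ≥ 2, n ≥ 1, and 1 ≤ j ≤ min(n, k). Then ∂/∂t_j (G_n) = n · F_{n−j}, where by convention F_0 = 1. -/

import Mathlib

open MvPolynomial Finset

/-- The weight coefficient `A_ω(α)` of Theorem 2.1 (for `α ≠ 0`):
`A_ω(α) = multinomial(α) · (Σ α_i ω_i) / (Σ α_i)`. -/
noncomputable def Aw {k : ℕ} (ω : Fin k → ℝ) (α : Fin k → ℕ) : ℝ :=
  (Nat.multinomial Finset.univ α : ℝ) * (∑ i, (α i : ℝ) * ω i) / (∑ i, (α i : ℝ))

/-- The isobaric degree `Σ_{i=1}^k i·α_i` of an exponent vector. -/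
def isoDeg {k : ℕ} (α : Fin k → ℕ) : ℕ := ∑ i, (i.1 + 1) * α i

/-- The (finite) set of exponent vectors of isobaric degree `n`. -/
def wipIndex (k n : ℕ) : Finset (Fin k → ℕ) :=
  (Fintype.piFinset fun _ : Fin k => Finset.range (n + 1)).filter fun α => isoDeg α = n

/-- The weighted isobaric polynomial `P_{n,ω} = Σ_α A_ω(α)·t^α`. -/
noncomputable def WIP (k n : ℕ) (ω : Fin k → ℝ) : MvPolynomial (Fin k) ℝ :=
  ∑ α ∈ wipIndex k n, MvPolynomial.monomial (Finsupp.equivFunOnFinite.symm α) (Aw ω α)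

/-- The operator `T_m(P) = D₁₁P − Σ_j t_j D_{2j}P − m·D₂P`. -/
noncomputable def Tm (k : ℕ) (hk : 2 ≤ k) (m : ℝ) (P : MvPolynomial (Fin k) ℝ) :
    MvPolynomial (Fin k) ℝ :=
  pderiv (⟨0, by omega⟩ : Fin k) (pderiv (⟨0, by omega⟩ : Fin k) P)
    - ∑ j : Fin k, X j * pderiv (⟨1, by omega⟩ : Fin k) (pderiv j P)
    - C m * pderiv (⟨1, by omega⟩ : Fin k) P

/-- The `j`-th element `γ^{(j)}` of the string generated by `γ`. -/
def strElem (k : ℕ) (hk : 2 ≤ k) (γ : Fin k → ℕ) (j : ℕ) : Fin k → ℕ :=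
  fun i => if i = (⟨0, by omega⟩ : Fin k) then γ i + 2 * j
    else if i = (⟨1, by omega⟩ : Fin k) then γ i - j else γ i

/-- The `ω`-weighted string generated by `γ`:
`S_ω(γ) = Σ_{j=0}^{γ₂} A_ω(γ^{(j)})·t^{γ^{(j)}}`. -/
noncomputable def strPoly (k : ℕ) (hk : 2 ≤ k) (ω : Fin k → ℝ) (γ : Fin k → ℕ) :
    MvPolynomial (Fin k) ℝ :=
  ∑ j ∈ Finset.range (γ (⟨1, by omega⟩ : Fin k) + 1),
    MvPolynomial.monomial (Finsupp.equivFunOnFinite.symm (strElem k hk γ j))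
      (Aw ω (strElem k hk γ j))

/-- The generalized Fibonacci polynomial `F_n = Σ_α multinomial(α)·t^α`
(over exponent vectors of isobaric degree `n`); note `F_0 = 1`. -/
noncomputable def Fpoly (k n : ℕ) : MvPolynomial (Fin k) ℝ :=
  ∑ α ∈ wipIndex k n,
    MvPolynomial.monomial (Finsupp.equivFunOnFinite.symm α) (Nat.multinomial Finset.univ α : ℝ)

/-- The generalized Lucas polynomial `G_n = P_{n,ν}`, `ν_i = i`. -/
noncomputable def Gpoly (k n : ℕ) : MvPolynomial (Fin k) ℝ :=
  WIP k n (fun i => (i.1 + 1 : ℝ))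

section Aux

lemma apply_le_isoDeg {k : ℕ} (α : Fin k → ℕ) (i : Fin k) : α i ≤ isoDeg α := by
  calc α i ≤ (i.1 + 1) * α i := Nat.le_mul_of_pos_left _ (Nat.succ_pos _)
    _ ≤ isoDeg α := by
        unfold isoDeg
        exact Finset.single_le_sum (f := fun i => (i.1 + 1) * α i)
          (fun i _ => Nat.zero_le _) (Finset.mem_univ i)

lemma mem_wipIndex {k n : ℕ} (α : Fin k → ℕ) (hd : isoDeg α = n) : α ∈ wipIndex k n := by
  simp only [wipIndex, Finset.mem_filter, Fintype.mem_piFinset, Finset.mem_range]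
  exact ⟨fun i => Nat.lt_succ_of_le (hd ▸ apply_le_isoDeg α i), hd⟩

lemma isoDeg_of_mem_wipIndex {k n : ℕ} {α : Fin k → ℕ} (h : α ∈ wipIndex k n) :
    isoDeg α = n := (Finset.mem_filter.mp h).2

lemma isoDeg_add_single {k : ℕ} (β : Fin k → ℕ) (ι : Fin k) :
    isoDeg (fun i => β i + if i = ι then 1 else 0) = isoDeg β + (ι.1 + 1) := by
  unfold isoDeg
  simp only [Nat.mul_add, Finset.sum_add_distrib, mul_ite, mul_one, mul_zero]
  simp [Finset.sum_ite_eq']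

lemma sum_add_single {k : ℕ} (β : Fin k → ℕ) (ι : Fin k) :
    ∑ i, (β i + if i = ι then 1 else 0) = (∑ i, β i) + 1 := by
  rw [Finset.sum_add_distrib]
  simp [Finset.sum_ite_eq']

open Nat in
lemma multinomial_key {k : ℕ} (β : Fin k → ℕ) (ι : Fin k) :
    Nat.multinomial Finset.univ (fun i => β i + if i = ι then 1 else 0) * (β ι + 1)
      = ((∑ i, β i) + 1) * Nat.multinomial Finset.univ β := by
  set α : Fin k → ℕ := fun i => β i + if i = ι then 1 else 0 with hα
  have hprod : ∏ i, (α i)! = (β ι + 1) * ∏ i, (β i)! := by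
    rw [← Finset.mul_prod_erase Finset.univ (fun i => (α i)!) (Finset.mem_univ ι),
        ← Finset.mul_prod_erase Finset.univ (fun i => (β i)!) (Finset.mem_univ ι)]
    have h1 : (α ι)! = (β ι + 1) * (β ι)! := by simp [hα, Nat.factorial_succ]
    have h2 : ∀ i ∈ Finset.univ.erase ι, (α i)! = (β i)! := by
      intro i hi
      simp [hα, Finset.ne_of_mem_erase hi]
    rw [Finset.prod_congr rfl h2, h1, mul_assoc]
  have hsum : ∑ i, α i = (∑ i, β i) + 1 := sum_add_single β ι
  have hPβ : 0 < ∏ i, (β i)! := Finset.prod_pos fun i _ => Nat.factorial_pos _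
  apply Nat.eq_of_mul_eq_mul_right hPβ
  have specα := Nat.multinomial_spec Finset.univ α
  have specβ := Nat.multinomial_spec Finset.univ β
  calc Nat.multinomial Finset.univ α * (β ι + 1) * ∏ i, (β i)!
      = (∏ i, (α i)!) * Nat.multinomial Finset.univ α := by rw [hprod]; ring
    _ = ((∑ i, β i) + 1)! := by rw [specα, hsum]
    _ = ((∑ i, β i) + 1) * ((∏ i, (β i)!) * Nat.multinomial Finset.univ β) := by
        rw [specβ, Nat.factorial_succ]
    _ = ((∑ i, β i) + 1) * Nat.multinomial Finset.univ β * ∏ i, (β i)! := by ring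

end Aux

/-- `∂/∂t_j (G_n) = n · F_{n−j}` for `1 ≤ j ≤ min(n,k)` (with `F_0 = 1`). -/
theorem pderiv_lucas (k : ℕ) (hk : 2 ≤ k) (n : ℕ) (hn : 1 ≤ n) (j : ℕ)
    (hj1 : 1 ≤ j) (hjn : j ≤ n) (hjk : j ≤ k) :
    pderiv (⟨j - 1, by omega⟩ : Fin k) (Gpoly k n) = (n : ℝ) • Fpoly k (n - j) := by
  classical
  have main : ∀ ι : Fin k, ι.1 + 1 = j →
      pderiv ι (Gpoly k n) = (n : ℝ) • Fpoly k (n - j) := by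
    intro ι hι1
    rw [Gpoly, WIP, map_sum, Fpoly, Finset.smul_sum]
    have hzero : ∀ α ∈ wipIndex k n,
        pderiv ι (MvPolynomial.monomial (Finsupp.equivFunOnFinite.symm α)
          (Aw (fun i => (i.1 + 1 : ℝ)) α)) ≠ 0 → α ι ≠ 0 := by
      intro α _ h hz
      apply h
      rw [pderiv_monomial]
      simp [hz]
    rw [← Finset.sum_filter_of_ne hzero]
    set toβ : (Fin k → ℕ) → (Fin k → ℕ) := fun α i => α i - if i = ι then 1 else 0 with htoβ
    set toα : (Fin k → ℕ) → (Fin k → ℕ) := fun β i => β i + if i = ι then 1 else 0 with htoα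
    refine Finset.sum_nbij' toβ toα ?_ ?_ ?_ ?_ ?_
    · -- forward membership
      intro α hα
      rw [Finset.mem_filter] at hα
      obtain ⟨hα, hαι⟩ := hα
      have hback : toα (toβ α) = α := by
        funext i
        simp only [htoα, htoβ]
        split_ifs with h
        · subst h; omega
        · omega
      have hdα : isoDeg α = n := isoDeg_of_mem_wipIndex hα
      have hd : isoDeg (toβ α) = n - j := by
        have := isoDeg_add_single (toβ α) ι
        rw [show (fun i => toβ α i + if i = ι then 1 else 0) = toα (toβ α) from rfl,
          hback, hdα, hι1] at this
        omega
      exact mem_wipIndex _ hd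
    · -- backward membership
      intro β hβ
      have hdβ : isoDeg β = n - j := isoDeg_of_mem_wipIndex hβ
      have hd : isoDeg (toα β) = n := by
        have := isoDeg_add_single β ι
        rw [hdβ, hι1] at this
        have : isoDeg (toα β) = n - j + j := this
        omega
      rw [Finset.mem_filter]
      refine ⟨mem_wipIndex _ hd, ?_⟩
      simp [htoα]
    · -- left inverse
      intro α hα
      rw [Finset.mem_filter] at hα
      funext i
      simp only [htoα, htoβ]
      split_ifs with h
      · subst h; have := hα.2; omega
      · omega
    · -- right inverse
      intro β _
      funext i
      simp only [htoα, htoβ]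
      split_ifs with h <;> omega
    · -- term equality
      intro α hα
      rw [Finset.mem_filter] at hα
      obtain ⟨hα, hαι⟩ := hα
      set β : Fin k → ℕ := toβ α with hβdef
      have hback : toα β = α := by
        funext i
        simp only [htoα, htoβ, hβdef]
        split_ifs with h
        · subst h; omega
        · omega
      have hdα : isoDeg α = n := isoDeg_of_mem_wipIndex hα
      have hexp : Finsupp.equivFunOnFinite.symm α - Finsupp.single ι 1
          = Finsupp.equivFunOnFinite.symm β := by
        ext i
        simp only [Finsupp.coe_tsub, Pi.sub_apply, Finsupp.coe_equivFunOnFinite_symm,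
          Finsupp.single_apply, hβdef, htoβ]
        by_cases h : i = ι
        · subst h; simp
        · rw [if_neg (show ¬ι = i from fun hh => h hh.symm), if_neg h]
      rw [pderiv_monomial, smul_monomial, hexp]
      congr 1
      simp only [Finsupp.coe_equivFunOnFinite_symm, smul_eq_mul]
      have hαβ : ∀ i, α i = β i + if i = ι then 1 else 0 := by
        intro i
        conv_lhs => rw [← hback]
      have hsumν : (∑ i, (α i : ℝ) * ((i.1 : ℝ) + 1)) = (n : ℝ) := by
        rw [← hdα]
        unfold isoDeg
        push_cast
        exact Finset.sum_congr rfl fun i _ => by ring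
      have hsum : ∑ i, α i = (∑ i, β i) + 1 := by
        calc ∑ i, α i = ∑ i, (β i + if i = ι then 1 else 0) :=
              Finset.sum_congr rfl fun i _ => hαβ i
          _ = (∑ i, β i) + 1 := sum_add_single β ι
      have hkey : Nat.multinomial Finset.univ α * (β ι + 1)
          = ((∑ i, β i) + 1) * Nat.multinomial Finset.univ β := by
        have := multinomial_key β ι
        rwa [show (fun i => β i + if i = ι then 1 else 0) = toα β from rfl, hback] at this
      have hαι' : α ι = β ι + 1 := by rw [hαβ ι]; simp
      have hsR : (∑ i, (α i : ℝ)) = ((∑ i, β i : ℕ) : ℝ) + 1 := by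
        push_cast [← Nat.cast_sum]
        exact_mod_cast congrArg (Nat.cast : ℕ → ℝ) hsum
      have hspos : ((∑ i, β i : ℕ) : ℝ) + 1 ≠ 0 := by positivity
      show (↑(Nat.multinomial Finset.univ α) * ∑ i, (α i : ℝ) * ((i.1 : ℝ) + 1))
          / (∑ i, (α i : ℝ)) * ((α ι : ℕ) : ℝ)
          = (n : ℝ) * ((Nat.multinomial Finset.univ β : ℕ) : ℝ)
      rw [hsumν, hsR, hαι']
      have hkeyR : (Nat.multinomial Finset.univ α : ℝ) * ((β ι : ℝ) + 1)
          = (((∑ i, β i : ℕ) : ℝ) + 1) * (Nat.multinomial Finset.univ β : ℝ) := by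
        exact_mod_cast hkey
      rw [div_mul_eq_mul_div, div_eq_iff hspos]
      push_cast at hkeyR ⊢
      linear_combination (n : ℝ) * hkeyR
  exact main ⟨j - 1, by omega⟩ (show j - 1 + 1 = j by omega)
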